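/- arXiv:1909.05319 — 4 statements merged into one kernel-verified Lean document; each statement's English description precedes it below -/
import Mathlib

section
/- Let ξ, μ, and R_0, R_1, R_2, ... be n×n matrices over a field K of characteristic 0, with R_0 = Id, satisfying the recursion [ξ, R_{k+1}] = R_k(μ - k·Id) for all k ≥ 0. Assume ξ is symmetric and μ is anti-symmetric (μ^t = -μ). Define P_m := Σ_{j=0}^{m} (-1)^j R_j^t R_{m-j}. Then for every m ≥ 0, [ξ, P_{m+1}] = [P_m, μ] - m·P_m. -/
open Matrix Finset in
/-- The commutator identity `[ξ, P_{m+1}] = [P_m, μ] - m·P_m` for the partial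
sums `P_m = Σ_{j=0}^m (-1)^j R_jᵗ R_{m-j}` of an R-matrix recursion. -/
theorem r_matrix_lagrangian_commutator
    {K : Type*} [Field K] [CharZero K] {n : ℕ}
    (ξ μ : Matrix (Fin n) (Fin n) K)
    (hξ : ξᵀ = ξ) (hμ : μᵀ = -μ)
    (R : ℕ → Matrix (Fin n) (Fin n) K)
    (hR0 : R 0 = 1)
    (hrec : ∀ k : ℕ, ξ * R (k+1) - R (k+1) * ξ = R k * (μ - (k : K) • 1))
    (P : ℕ → Matrix (Fin n) (Fin n) K)
    (hP : ∀ m : ℕ, P m = ∑ j ∈ range (m+1), ((-1 : K) ^ j) • ((R j)ᵀ * R (m - j))) :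
    ∀ m : ℕ, ξ * P (m+1) - P (m+1) * ξ = (P m * μ - μ * P m) - (m : K) • P m := by
  -- transposed recursion
  have htr : ∀ k : ℕ, ξ * (R (k+1))ᵀ - (R (k+1))ᵀ * ξ = (μ + (k : K) • 1) * (R k)ᵀ := by
    intro k
    have h := congrArg Matrix.transpose (hrec k)
    simp only [Matrix.transpose_sub, Matrix.transpose_mul, Matrix.transpose_smul,
      Matrix.transpose_one, hξ, hμ] at h
    have h2 : ξ * (R (k+1))ᵀ - (R (k+1))ᵀ * ξ = -((R (k+1))ᵀ * ξ - ξ * (R (k+1))ᵀ) := by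
      abel
    rw [h2, h]
    noncomm_ring
  intro m
  rw [hP (m+1), hP m]
  rw [Finset.mul_sum, Finset.sum_mul, ← Finset.sum_sub_distrib]
  have split : ∀ j ∈ range (m+2),
      ξ * ((-1:K)^j • ((R j)ᵀ * R (m+1-j))) - ((-1:K)^j • ((R j)ᵀ * R (m+1-j))) * ξ
      = (-1:K)^j • ((ξ * (R j)ᵀ - (R j)ᵀ * ξ) * R (m+1-j))
        + (-1:K)^j • ((R j)ᵀ * (ξ * R (m+1-j) - R (m+1-j) * ξ)) := by
    intro j _
    rw [Matrix.mul_smul, Matrix.smul_mul, ← smul_add, ← smul_sub]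
    congr 1
    noncomm_ring
  rw [Finset.sum_congr rfl split, Finset.sum_add_distrib]
  -- first sum: peel the j = 0 term (which vanishes)
  have hA : (∑ j ∈ range (m+2),
        (-1:K)^j • ((ξ * (R j)ᵀ - (R j)ᵀ * ξ) * R (m+1-j)))
      = ∑ k ∈ range (m+1),
        (-1:K)^(k+1) • (((μ + (k : K) • 1) * (R k)ᵀ) * R (m-k)) := by
    rw [Finset.sum_range_succ']
    have h0 : (-1:K)^0 • ((ξ * (R 0)ᵀ - (R 0)ᵀ * ξ) * R (m+1-0)) = 0 := by
      simp [hR0]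
    rw [h0, add_zero]
    refine Finset.sum_congr rfl fun k hk => ?_
    have hidx : m + 1 - (k + 1) = m - k := by omega
    rw [hidx, htr k]
  -- second sum: peel the j = m+1 term (which vanishes)
  have hB : (∑ j ∈ range (m+2),
        (-1:K)^j • ((R j)ᵀ * (ξ * R (m+1-j) - R (m+1-j) * ξ)))
      = ∑ j ∈ range (m+1),
        (-1:K)^j • ((R j)ᵀ * (R (m-j) * (μ - ((m-j : ℕ) : K) • 1))) := by
    rw [Finset.sum_range_succ]
    have h0 : (-1:K)^(m+1) • ((R (m+1))ᵀ * (ξ * R (m+1-(m+1)) - R (m+1-(m+1)) * ξ)) = 0 := by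
      simp [hR0]
    rw [h0, add_zero]
    refine Finset.sum_congr rfl fun j hj => ?_
    have hj' : j ≤ m := by
      simp only [Finset.mem_range] at hj; omega
    have : m + 1 - j = (m - j) + 1 := by omega
    rw [this, hrec (m-j)]
  rw [hA, hB]
  -- Now everything is a sum over range (m+1); compare termwise with the RHS.
  rw [Finset.mul_sum, Finset.sum_mul, Finset.smul_sum, ← Finset.sum_sub_distrib,
    ← Finset.sum_sub_distrib, ← Finset.sum_add_distrib]
  refine Finset.sum_congr rfl fun j hj => ?_
  have hj' : j ≤ m := by
    simp only [Finset.mem_range] at hj; omega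
  have hc : ((m - j : ℕ) : K) = (m : K) - (j : K) := Nat.cast_sub hj'
  rw [hc]
  rw [Matrix.smul_mul, Matrix.mul_smul]
  set A := (R j)ᵀ * R (m - j) with hAdef
  have e1 : ((μ + (j : K) • 1) * (R j)ᵀ) * R (m-j) = μ * A + (j : K) • A := by
    rw [hAdef]
    noncomm_ring
  have e2 : (R j)ᵀ * (R (m-j) * (μ - ((m : K) - (j : K)) • 1))
      = A * μ - ((m : K) - (j : K)) • A := by
    rw [hAdef]
    noncomm_ring
  rw [e1, e2, pow_succ]
  module
end

section
/- Let ξ = diag(λ_1, ..., λ_n) be a diagonal matrix over a field K of characteristic 0, and let μ be an n×n matrix with μ_{ij} = 0 whenever λ_i = λ_j. Then there exists a unique sequence of matrices R_0 = Id, R_1, R_2, ... satisfying, for all k ≥ 0, both [ξ, R_{k+1}] = R_k(μ - k·Id) (giving the off-diagonal-block entries of R_{k+1}) and (R_{k+1})_{ij} = (1/(k+1)) Σ_l (R_{k+1})_{il} μ_{lj} for all i, j with λ_i = λ_j. -/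
open Finset

section Aux

variable {K : Type*} [Field K] [CharZero K] {n : ℕ}
variable (lam : Fin n → K) (μ : Matrix (Fin n) (Fin n) K)

/-- One step of the recursion. -/
noncomputable def Rstep (k : ℕ) (A : Matrix (Fin n) (Fin n) K) :
    Matrix (Fin n) (Fin n) K :=
  letI := Classical.decEq K
  Matrix.of fun i j =>
    if lam i = lam j then
      (1 / ((k : K) + 1)) *
        ∑ l, (if lam i = lam l then 0
          else (lam i - lam l)⁻¹ * ((A * (μ - (k : K) • 1)) i l)) * μ l j
    else (lam i - lam j)⁻¹ * ((A * (μ - (k : K) • 1)) i j)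

/-- The full sequence. -/
noncomputable def Rseq : ℕ → Matrix (Fin n) (Fin n) K
  | 0 => 1
  | (k+1) => Rstep lam μ k (Rseq k)

lemma comm_apply (A : Matrix (Fin n) (Fin n) K) (i j : Fin n) :
    (Matrix.diagonal lam * A - A * Matrix.diagonal lam) i j
      = (lam i - lam j) * A i j := by
  simp only [Matrix.sub_apply, Matrix.diagonal_mul, Matrix.mul_diagonal]
  ring

lemma mulsub_apply (A : Matrix (Fin n) (Fin n) K) (c : K) (i j : Fin n) :
    (A * (μ - c • 1)) i j = (∑ l, A i l * μ l j) - c * A i j := by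
  rw [mul_sub, Matrix.mul_smul, mul_one, Matrix.sub_apply, Matrix.smul_apply,
    Matrix.mul_apply, smul_eq_mul]

end Aux

open Finset in
/-- Existence and uniqueness of the R-matrix associated to a grading operator
`μ` and a diagonal matrix `ξ = diag(λ)` in the semi-simple setting. -/
theorem r_matrix_exists_unique
    {K : Type*} [Field K] [CharZero K] {n : ℕ}
    (lam : Fin n → K)
    (μ : Matrix (Fin n) (Fin n) K)
    (hμ : ∀ i j, lam i = lam j → μ i j = 0) :
    ∃! R : ℕ → Matrix (Fin n) (Fin n) K,
      R 0 = 1 ∧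
      ∀ k : ℕ,
        (Matrix.diagonal lam * R (k+1) - R (k+1) * Matrix.diagonal lam
            = R k * (μ - (k : K) • 1)) ∧
        (∀ i j, lam i = lam j →
          R (k+1) i j = (1 / ((k : K) + 1)) * ∑ l, R (k+1) i l * μ l j) := by
  classical
  set R := Rseq lam μ with hR
  -- diagonal-block condition for each step
  have hdiag : ∀ (k : ℕ) (i j : Fin n), lam i = lam j →
      R (k+1) i j = (1 / ((k : K) + 1)) * ∑ l, R (k+1) i l * μ l j := by
    intro k i j hij
    show Rstep lam μ k (R k) i j = _
    rw [Rstep]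
    simp only [Matrix.of_apply, if_pos hij]
    congr 1
    refine Finset.sum_congr rfl fun l _ => ?_
    by_cases hl : lam i = lam l
    · rw [if_pos hl, hμ l j (hl.symm.trans hij), mul_zero, mul_zero]
    · rw [if_neg hl]
      show _ = Rstep lam μ k (R k) i l * μ l j
      rw [Rstep]
      simp only [Matrix.of_apply, if_neg hl]
  -- vanishing of (R k * (μ - k•1)) on diagonal blocks
  have hvan : ∀ (k : ℕ) (i j : Fin n), lam i = lam j →
      (R k * (μ - (k : K) • 1)) i j = 0 := by
    intro k i j hij
    rw [mulsub_apply]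
    cases k with
    | zero =>
      simp only [Nat.cast_zero, zero_mul, sub_zero]
      calc ∑ l, R 0 i l * μ l j = ∑ l, (1 : Matrix (Fin n) (Fin n) K) i l * μ l j := rfl
        _ = μ i j := by
            rw [← Matrix.mul_apply, one_mul]
        _ = 0 := hμ i j hij
    | succ m =>
      have h := hdiag m i j hij
      have hm1 : ((m : K) + 1) ≠ 0 := by
        exact_mod_cast (Nat.cast_ne_zero (R := K)).mpr (Nat.succ_ne_zero m)
      rw [h]
      push_cast
      field_simp
      ring
  -- commutator equation holds
  have hcomm : ∀ k : ℕ,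
      Matrix.diagonal lam * R (k+1) - R (k+1) * Matrix.diagonal lam
        = R k * (μ - (k : K) • 1) := by
    intro k
    ext i j
    rw [comm_apply]
    by_cases hij : lam i = lam j
    · rw [hvan k i j hij, hij, sub_self, zero_mul]
    · have : R (k+1) i j = (lam i - lam j)⁻¹ * ((R k * (μ - (k : K) • 1)) i j) := by
        show Rstep lam μ k (R k) i j = _
        rw [Rstep]; simp only [Matrix.of_apply, if_neg hij]
      rw [this]
      have hne : lam i - lam j ≠ 0 := sub_ne_zero.mpr hij
      field_simp
  refine ⟨R, ⟨rfl, fun k => ⟨hcomm k, hdiag k⟩⟩, ?_⟩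
  -- uniqueness
  rintro S ⟨hS0, hS⟩
  funext k
  induction k with
  | zero => rw [hS0]; rfl
  | succ k ih =>
    have hoff : ∀ i j, lam i ≠ lam j → S (k+1) i j = R (k+1) i j := by
      intro i j hij
      have h1 := congrFun (congrFun ((hS k).1) i) j
      have h2 := congrFun (congrFun (hcomm k) i) j
      rw [comm_apply] at h1 h2
      rw [ih] at h1
      have hne : lam i - lam j ≠ 0 := sub_ne_zero.mpr hij
      exact mul_left_cancel₀ hne (h1.trans h2.symm)
    ext i j
    by_cases hij : lam i = lam j
    · rw [(hS k).2 i j hij, hdiag k i j hij]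
      congr 1
      refine Finset.sum_congr rfl fun l _ => ?_
      by_cases hl : lam i = lam l
      · rw [hμ l j (hl.symm.trans hij), mul_zero, mul_zero]
      · rw [hoff i l hl]
    · exact hoff i j hij
end

section
/- Let ξ = diag(λ_1,...,λ_n), let μ satisfy μ_{ij} = 0 whenever λ_i = λ_j, and let (P_m)_{m≥0} be a sequence of n×n matrices with P_0 = Id satisfying [ξ, P_{m+1}] = [P_m, μ] - m·P_m for all m ≥ 0. Then P_m = 0 for all m ≥ 1. -/
namespace Matrix

variable {ι R : Type*} [Fintype ι]

theorem diagonal_mul_sub_mul_diagonal_apply [DecidableEq ι] [CommRing R] (d : ι → R)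
    (A : Matrix ι ι R) (i j : ι) :
    (diagonal d * A - A * diagonal d) i j = (d i - d j) * A i j := by
  rw [sub_apply, diagonal_mul, mul_diagonal, sub_mul, mul_comm (A i j)]

theorem apply_eq_zero_of_diagonal_mul_eq_mul_diagonal [DecidableEq ι] [CommRing R]
    [NoZeroDivisors R] {d : ι → R} {A : Matrix ι ι R} (hA : diagonal d * A = A * diagonal d)
    {i j : ι} (hij : d i ≠ d j) : A i j = 0 := by
  have h : (diagonal d * A - A * diagonal d) i j = 0 := by rw [sub_eq_zero.mpr hA, zero_apply]
  rw [diagonal_mul_sub_mul_diagonal_apply] at h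
  exact (mul_eq_zero.mp h).resolve_left (sub_ne_zero.mpr hij)

theorem mul_sub_mul_apply_eq_zero_of_diagonal_blocks [Ring R] {d : ι → R}
    {A μ : Matrix ι ι R} (hA : ∀ i j, d i ≠ d j → A i j = 0)
    (hμ : ∀ i j, d i = d j → μ i j = 0) {i j : ι} (hij : d i = d j) :
    (A * μ - μ * A) i j = 0 := by
  have hAμ : (A * μ) i j = 0 := by
    refine (mul_apply ..).trans (Finset.sum_eq_zero fun l _ => ?_)
    by_cases hil : d i = d l
    · rw [hμ l j (hil.symm.trans hij), mul_zero]
    · rw [hA i l hil, zero_mul]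
  have hμA : (μ * A) i j = 0 := by
    refine (mul_apply ..).trans (Finset.sum_eq_zero fun l _ => ?_)
    by_cases hlj : d l = d j
    · rw [hμ i l (hij.trans hlj.symm), zero_mul]
    · rw [hA l j hlj, mul_zero]
  rw [sub_apply, hAμ, hμA, sub_zero]

/-- Off the level-set blocks of `d`, `A` vanishes by `hA`; on them `[A, μ]` vanishes, so `hB`
reads `0 = 0 - c • A`. -/
theorem eq_zero_of_diagonal_commutator_eq_commutator_sub_smul [DecidableEq ι]
    [CommRing R] [NoZeroDivisors R] {d : ι → R} {μ A B : Matrix ι ι R} {c : R} (hc : c ≠ 0)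
    (hμ : ∀ i j, d i = d j → μ i j = 0) (hA : diagonal d * A = A * diagonal d)
    (hB : diagonal d * B - B * diagonal d = (A * μ - μ * A) - c • A) : A = 0 := by
  have hA_blocks : ∀ i j, d i ≠ d j → A i j = 0 := fun i j hij =>
    apply_eq_zero_of_diagonal_mul_eq_mul_diagonal hA hij
  ext i j
  by_cases hij : d i = d j
  · have h : (diagonal d * B - B * diagonal d) i j = ((A * μ - μ * A) - c • A) i j := by
      rw [hB]
    rw [diagonal_mul_sub_mul_diagonal_apply, hij, sub_self, zero_mul, sub_apply,
      mul_sub_mul_apply_eq_zero_of_diagonal_blocks hA_blocks hμ hij, smul_apply, smul_eq_mul,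
      zero_sub, zero_eq_neg] at h
    exact (mul_eq_zero.mp h).resolve_left hc
  · exact hA_blocks i j hij

end Matrix

/-- The inductive vanishing of the sequence `P_m` satisfying `P_0 = Id` and
`[ξ, P_{m+1}] = [P_m, μ] - m·P_m`, when `ξ = diag(λ)` and `μ_{ij} = 0`
whenever `λ_i = λ_j`. -/
theorem p_matrices_vanish
    {K : Type*} [Field K] [CharZero K] {n : ℕ}
    (lam : Fin n → K)
    (μ : Matrix (Fin n) (Fin n) K)
    (hμ : ∀ i j, lam i = lam j → μ i j = 0)
    (P : ℕ → Matrix (Fin n) (Fin n) K)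
    (hP0 : P 0 = 1)
    (hrec : ∀ m : ℕ, Matrix.diagonal lam * P (m+1) - P (m+1) * Matrix.diagonal lam
        = (P m * μ - μ * P m) - (m : K) • P m) :
    ∀ m : ℕ, 1 ≤ m → P m = 0 := by
  have step (m : ℕ) (hm : (P m * μ - μ * P m) - (m : K) • P m = 0) : P (m + 1) = 0 :=
    Matrix.eq_zero_of_diagonal_commutator_eq_commutator_sub_smul (Nat.cast_add_one_ne_zero m)
      hμ (sub_eq_zero.mp ((hrec m).trans hm)) (by simpa only [Nat.cast_succ] using hrec (m + 1))
  intro m hm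
  induction m, hm using Nat.le_induction with
  | base => exact step 0 (by simp [hP0])
  | succ k _ ih => exact step k (by simp [ih])
end

section
/- Let CL be the Clifford algebra over a field K of characteristic 0 with generators X_1, ..., X_n and relations X_i·X_i = -d_i/2 and X_i·X_j = -X_j·X_i for i ≠ j (with all d_i ∈ K). Let G: CL → CL be the K-linear map G(c) = (-1)^{|c|(n+1)} X_1⋯X_n · c · X_1⋯X_n, where |c| is the Z/2Z-degree of a homogeneous element c. Then G = (-1)^{n(n+1)/2} · (d_1⋯d_n / 2^n) · Id, and in particular the trace of G equals (-1)^{n(n+1)/2} · det(diag(d_1,...,d_n)) = (-1)^{n(n+1)/2} d_1⋯d_n. -/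
open CliffordAlgebra

section Aux

variable {K : Type*} [Field K] [CharZero K] {n : ℕ}

/-- Moving an element past a list product, with per-factor commutation factors. -/
private lemma aux_mul_list_comm {A : Type*} [Ring A] [Algebra K A]
    (y : A) (x : Fin n → A) (ε : Fin n → K) :
    ∀ (l : List (Fin n)), (∀ k ∈ l, y * x k = ε k • (x k * y)) →
      y * (l.map x).prod = (l.map ε).prod • ((l.map x).prod * y)
  | [], _ => by simp
  | a :: t, h => by
    have ha := h a List.mem_cons_self
    have ht := aux_mul_list_comm y x ε t (fun k hk => h k (List.mem_cons_of_mem a hk))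
    simp only [List.map_cons, List.prod_cons]
    rw [← mul_assoc, ha, smul_mul_assoc, mul_assoc, ht, mul_smul_comm, smul_smul, mul_assoc]

variable (d : Fin n → K) (Q : QuadraticForm K (Fin n → K))
    (hQ : Q = QuadraticMap.weightedSumSquares K (fun i => -(d i) / 2))

include hQ

private lemma aux_Q_single (j : Fin n) : Q (Pi.single j 1) = -(d j)/2 := by
  subst hQ
  rw [QuadraticMap.weightedSumSquares_apply]
  simp [Pi.single_apply]

private lemma aux_polar (j k : Fin n) (h : k ≠ j) :
    QuadraticMap.polar Q (Pi.single j 1) (Pi.single k 1) = 0 := by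
  subst hQ
  simp only [QuadraticMap.polar, QuadraticMap.weightedSumSquares_apply]
  rw [← Finset.sum_sub_distrib, ← Finset.sum_sub_distrib]
  apply Finset.sum_eq_zero
  intro i _
  rcases eq_or_ne i j with rfl | hj <;> rcases eq_or_ne i k with rfl | hk <;>
    simp_all [Pi.single_apply, smul_eq_mul]

private lemma aux_anti (j k : Fin n) :
    ι Q (Pi.single j 1) * ι Q (Pi.single k 1)
      = (if k = j then (1:K) else (-1:K)) • (ι Q (Pi.single k 1) * ι Q (Pi.single j 1)) := by
  split
  next heq => subst heq; rw [one_smul]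
  next hne =>
    have h := CliffordAlgebra.ι_mul_ι_add_swap (Q := Q) (Pi.single j (1:K)) (Pi.single k 1)
    rw [aux_polar d Q hQ j k hne, map_zero] at h
    rw [neg_one_smul]
    exact eq_neg_of_add_eq_zero_left h

/-- commutation of a generator with the full product ω. -/
private lemma aux_comm_basis (j : Fin n) :
    ι Q (Pi.single j 1) * ((List.finRange n).map fun k => ι Q (Pi.single k 1)).prod
      = ((-1:K)^(n+1)) •
        ((((List.finRange n).map fun k => ι Q (Pi.single k 1)).prod) * ι Q (Pi.single j 1)) := by
  rw [aux_mul_list_comm (ι Q (Pi.single j 1)) _ (fun k => if k = j then (1:K) else (-1:K))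
    (List.finRange n) (fun k _ => aux_anti d Q hQ j k)]
  congr 1
  rw [← List.ofFn_eq_map, List.prod_ofFn]
  have h1 : ∀ k : Fin n, (if k = j then (1:K) else -1) = (-1) * (if k = j then -1 else 1) := by
    intro k; split <;> ring
  rw [Finset.prod_congr rfl (fun k _ => h1 k), Finset.prod_mul_distrib, Finset.prod_const,
    Finset.prod_ite_eq' Finset.univ j (fun _ => (-1:K))]
  simp [pow_succ]


/-- commutation of ι v with ω for arbitrary v. -/
private lemma aux_comm_v (v : Fin n → K) :
    ι Q v * ((List.finRange n).map fun k => ι Q (Pi.single k 1)).prod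
      = ((-1:K)^(n+1)) •
        ((((List.finRange n).map fun k => ι Q (Pi.single k 1)).prod) * ι Q v) := by
  set ω := ((List.finRange n).map fun k => ι Q (Pi.single k 1)).prod with hω
  have : (LinearMap.mulRight K ω).comp (ι Q)
      = ((-1:K)^(n+1)) • ((LinearMap.mulLeft K ω).comp (ι Q)) := by
    apply (Pi.basisFun K (Fin n)).ext
    intro j
    simp only [LinearMap.comp_apply, LinearMap.smul_apply, LinearMap.mulRight_apply,
      LinearMap.mulLeft_apply, Pi.basisFun_apply]
    exact aux_comm_basis d Q hQ j
  simpa using LinearMap.congr_fun this v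

private lemma aux_comm_pair (m₁ m₂ : Fin n → K) :
    ((List.finRange n).map fun k => ι Q (Pi.single k 1)).prod * (ι Q m₁ * ι Q m₂)
      = (ι Q m₁ * ι Q m₂) * ((List.finRange n).map fun k => ι Q (Pi.single k 1)).prod := by
  set ω := ((List.finRange n).map fun k => ι Q (Pi.single k 1)).prod with hω
  have hs : ((-1:K)^(n+1)) * ((-1:K)^(n+1)) = 1 := by
    rw [← pow_add, ← two_mul, pow_mul]; norm_num
  have h1 : ∀ m : Fin n → K, ω * ι Q m = ((-1:K)^(n+1)) • (ι Q m * ω) := by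
    intro m
    have := aux_comm_v d Q hQ m
    rw [← hω] at this
    rw [this, smul_smul, hs, one_smul]
  rw [← mul_assoc, h1 m₁, smul_mul_assoc, mul_assoc, h1 m₂, mul_smul_comm, smul_smul, hs,
    one_smul, mul_assoc]


private lemma aux_sq_list :
    ∀ (l : List (Fin n)), l.Nodup →
      (l.map fun k => ι Q (Pi.single k 1)).prod * (l.map fun k => ι Q (Pi.single k 1)).prod
        = algebraMap K _ (((-1:K)) ^ (l.length * (l.length - 1) / 2)
            * (l.map fun k => Q (Pi.single k 1)).prod)
  | [], _ => by simp
  | j :: t, hnd => by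
    have hjt : j ∉ t := (List.nodup_cons.mp hnd).1
    have hndt : t.Nodup := (List.nodup_cons.mp hnd).2
    have ih := aux_sq_list t hndt
    set Pt := (t.map fun k => ι Q (Pi.single k 1)).prod with hPt
    have hcomm : ι Q (Pi.single j 1) * Pt = ((-1:K)^t.length) • (Pt * ι Q (Pi.single j 1)) := by
      rw [aux_mul_list_comm (ι Q (Pi.single j 1)) _ (fun _ => (-1:K)) t
        (fun k hk => by
          have hkj : k ≠ j := fun h => hjt (h ▸ hk)
          simpa [hkj] using aux_anti d Q hQ j k)]
      congr 1
      simp [List.map_const']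
    have hcomm' : Pt * ι Q (Pi.single j 1) = ((-1:K)^t.length) • (ι Q (Pi.single j 1) * Pt) := by
      have hs : ((-1:K)^t.length) * ((-1:K)^t.length) = 1 := by
        rw [← pow_add, ← two_mul, pow_mul]; norm_num
      rw [hcomm, smul_smul, hs, one_smul]
    simp only [List.map_cons, List.prod_cons, ← hPt]
    calc ι Q (Pi.single j 1) * Pt * (ι Q (Pi.single j 1) * Pt)
        = ι Q (Pi.single j 1) * (Pt * ι Q (Pi.single j 1)) * Pt := by
          rw [mul_assoc, mul_assoc, mul_assoc]
      _ = ((-1:K)^t.length) • (ι Q (Pi.single j 1) * ι Q (Pi.single j 1) * (Pt * Pt)) := by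
          rw [hcomm', mul_smul_comm, smul_mul_assoc]
          congr 1
          simp only [mul_assoc]
      _ = algebraMap K _ (((-1:K)) ^ ((j :: t).length * ((j :: t).length - 1) / 2)
            * ((j :: t).map fun k => Q (Pi.single k 1)).prod) := by
          rw [CliffordAlgebra.ι_sq_scalar, ih, ← map_mul, Algebra.smul_def, ← map_mul]
          congr 1
          simp only [List.map_cons, List.prod_cons, List.length_cons]
          have h2 : ((-1:K))^t.length * (-1)^(t.length*(t.length-1)/2)
              = (-1)^((t.length + 1) * (t.length + 1 - 1) / 2) := by
            rw [← pow_add, Nat.triangle_succ]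
            ring_nf
          rw [← h2]
          ring


private lemma aux_omega_sq :
    ((List.finRange n).map fun k => ι Q (Pi.single k 1)).prod
      * ((List.finRange n).map fun k => ι Q (Pi.single k 1)).prod
      = algebraMap K _ (((-1:K)) ^ (n * (n + 1) / 2) * (∏ j, d j) / 2 ^ n) := by
  rw [aux_sq_list d Q hQ (List.finRange n) (List.nodup_finRange n)]
  congr 1
  rw [List.length_finRange, ← List.ofFn_eq_map, List.prod_ofFn]
  have h1 : ∀ j : Fin n, Q (Pi.single j 1) = (-1)/2 * d j := by
    intro j; rw [aux_Q_single d Q hQ j]; ring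
  rw [Finset.prod_congr rfl (fun j _ => h1 j), Finset.prod_mul_distrib, Finset.prod_const,
    Finset.card_univ, Fintype.card_fin, div_pow]
  have h2 : ((-1:K))^(n*(n-1)/2) * ((-1:K))^n = (-1)^(n*(n+1)/2) := by
    rw [← pow_add]
    congr 1
    have h3 := Nat.triangle_succ n
    simp only [Nat.add_sub_cancel] at h3
    rw [Nat.mul_comm (n+1) n] at h3
    omega
  rw [← h2]
  field_simp

end Aux

/-- In the Clifford algebra with generators X_i, relations X_i² = -d_i/2 and
X_iX_j = -X_jX_i (i ≠ j), the map G(c) = (-1)^{|c|(n+1)} X_1⋯X_n · c · X_1⋯X_n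
on homogeneous elements is (-1)^{n(n+1)/2}·(d_1⋯d_n/2ⁿ) times the identity. -/
theorem clifford_conjugation_scalar
    {K : Type*} [Field K] [CharZero K] (n : ℕ) (d : Fin n → K)
    (Q : QuadraticForm K (Fin n → K))
    (hQ : Q = QuadraticMap.weightedSumSquares K (fun i => -(d i) / 2)) :
    ∀ (i : ZMod 2) (c : CliffordAlgebra Q), c ∈ CliffordAlgebra.evenOdd Q i →
      ((-1 : K) ^ (i.val * (n + 1))) •
        ((List.ofFn fun j : Fin n => CliffordAlgebra.ι Q (Pi.single j (1 : K))).prod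
          * c *
         (List.ofFn fun j : Fin n => CliffordAlgebra.ι Q (Pi.single j (1 : K))).prod)
      = (((-1 : K) ^ (n * (n + 1) / 2)) * (∏ j, d j) / 2 ^ n) • c := by
  intro i c hc
  simp only [List.ofFn_eq_map]
  set ω := ((List.finRange n).map fun k => ι Q (Pi.single k 1)).prod with hω
  set S : K := ((-1 : K) ^ (n * (n + 1) / 2)) * (∏ j, d j) / 2 ^ n with hS
  have hωsq : ω * ω = algebraMap K _ S := aux_omega_sq d Q hQ
  have hs : ((-1:K)^(n+1)) * ((-1:K)^(n+1)) = 1 := by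
    rw [← pow_add, ← two_mul, pow_mul]; norm_num
  have keyeven : ∀ c, c ∈ CliffordAlgebra.evenOdd Q 0 → ω * c * ω = S • c := by
    intro c hc
    induction c, hc using CliffordAlgebra.even_induction with
    | algebraMap r =>
        rw [← Algebra.commutes r ω, mul_assoc, hωsq, ← map_mul, Algebra.smul_def, ← map_mul,
          mul_comm]
    | add x y hx hy ihx ihy =>
        rw [mul_add, add_mul, ihx, ihy, smul_add]
    | ι_mul_ι_mul m₁ m₂ x hx ih =>
        calc ω * (ι Q m₁ * ι Q m₂ * x) * ω
            = (ω * (ι Q m₁ * ι Q m₂)) * (x * ω) := by simp only [mul_assoc]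
          _ = ι Q m₁ * ι Q m₂ * (ω * x * ω) := by
              rw [aux_comm_pair d Q hQ m₁ m₂]
              simp only [mul_assoc]
              rfl
          _ = S • (ι Q m₁ * ι Q m₂ * x) := by rw [ih, mul_smul_comm]
  have keyodd : ∀ c, c ∈ CliffordAlgebra.evenOdd Q 1 →
      ω * c * ω = (((-1:K)^(n+1)) * S) • c := by
    intro c hc
    induction c, hc using CliffordAlgebra.odd_induction with
    | ι v =>
        have h1 : ω * ι Q v = ((-1:K)^(n+1)) • (ι Q v * ω) := by
          have := aux_comm_v d Q hQ v
          rw [← hω] at this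
          rw [this, smul_smul, hs, one_smul]
        rw [h1, smul_mul_assoc, mul_assoc, hωsq, ← Algebra.commutes S (ι Q v),
          ← Algebra.smul_def, smul_smul]
    | add x y hx hy ihx ihy =>
        rw [mul_add, add_mul, ihx, ihy, smul_add]
    | ι_mul_ι_mul m₁ m₂ x hx ih =>
        calc ω * (ι Q m₁ * ι Q m₂ * x) * ω
            = (ω * (ι Q m₁ * ι Q m₂)) * (x * ω) := by simp only [mul_assoc]
          _ = ι Q m₁ * ι Q m₂ * (ω * x * ω) := by
              rw [aux_comm_pair d Q hQ m₁ m₂]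
              simp only [mul_assoc]
              rfl
          _ = (((-1:K)^(n+1)) * S) • (ι Q m₁ * ι Q m₂ * x) := by rw [ih, mul_smul_comm]
  fin_cases i
  · rw [show ∀ h : 0 < 2, ZMod.val ((fun (i : ZMod 2) => i) ⟨0, h⟩) = 0 from fun _ => rfl]
    rw [Nat.zero_mul, pow_zero, one_smul]
    exact keyeven c hc
  · rw [show ∀ h : 1 < 2, ZMod.val ((fun (i : ZMod 2) => i) ⟨1, h⟩) = 1 from fun _ => rfl]
    rw [one_mul, keyodd c hc, smul_smul, ← mul_assoc, hs, one_mul]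
end
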